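/- arXiv:1611.00718 — 3 statements merged into one kernel-verified Lean document; each statement's English description precedes it below -/
import Mathlib

section
/- For every finite simple graph H, the homomorphism density functional t(H,·) is Lipschitz continuous with respect to the cut distance: for all graphons W and U, |t(H,W) − t(H,U)| ≤ |E(H)| · δ_□(W,U), where |E(H)| is the number of edges of H. -/
open MeasureTheory

attribute [local instance] MeasureTheory.Measure.Subtype.measureSpace

noncomputable section

/-- The unit interval `[0,1]` as a measure space (with Lebesgue measure). -/
abbrev unitI : Type := Set.Icc (0 : ℝ) 1

/-- A (labeled) graphon: a symmetric, measurable function `[0,1]² → [0,1]`. -/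
structure Graphon where
  toFun : unitI → unitI → ℝ
  measurable' : Measurable (Function.uncurry toFun)
  symm' : ∀ x y, toFun x y = toFun y x
  nonneg' : ∀ x y, 0 ≤ toFun x y
  le_one' : ∀ x y, toFun x y ≤ 1

/-- The cut distance between two (labeled) graphons: the infimum, over pairs of invertible
measure-preserving re-labelings `φ, ψ` of `[0,1]`, of the supremum over measurable sets
`S, T ⊆ [0,1]` of `|∫_{S×T} (W(φx,φy) - U(ψx,ψy))|`. -/
def cutDist (W U : Graphon) : ℝ :=
  ⨅ p : {p : (unitI ≃ᵐ unitI) × (unitI ≃ᵐ unitI) //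
      MeasurePreserving p.1 volume volume ∧ MeasurePreserving p.2 volume volume},
    ⨆ ST : {ST : Set unitI × Set unitI // MeasurableSet ST.1 ∧ MeasurableSet ST.2},
      |∫ q in ST.1.1 ×ˢ ST.1.2,
        (W.toFun (p.1.1 q.1) (p.1.1 q.2) - U.toFun (p.1.2 q.1) (p.1.2 q.2))|

/-- The index in `Fin n` of the pixel containing `x ∈ [0,1]`; for `x ∈ ((i-1)/n, i/n]`
this is `⌈n x⌉ - 1 = i - 1`, corresponding to the vertex labeled `i` in `{1, …, n}`. -/
def pixelIdx (n : ℕ) (hn : 0 < n) (x : unitI) : Fin n :=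
  ⟨min (n - 1) (⌈(n : ℝ) * x.1⌉₊ - 1), lt_of_le_of_lt (min_le_left _ _) (Nat.sub_lt hn one_pos)⟩

lemma measurable_pixelIdx (n : ℕ) (hn : 0 < n) : Measurable (pixelIdx n hn) := by
  have h1 : Measurable fun x : unitI => ⌈(n : ℝ) * x.1⌉₊ :=
    (Nat.measurable_ceil.comp (measurable_const.mul measurable_subtype_coe))
  exact (measurable_from_top (f := fun m : ℕ =>
    (⟨min (n - 1) (m - 1), lt_of_le_of_lt (min_le_left _ _) (Nat.sub_lt hn one_pos)⟩ : Fin n))).comp h1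

open scoped Classical in
/-- The pixel graphon of a finite simple graph `G` on vertex set `Fin n`. -/
def pixelGraphon {n : ℕ} (hn : 0 < n) (G : SimpleGraph (Fin n)) : Graphon where
  toFun x y := if G.Adj (pixelIdx n hn x) (pixelIdx n hn y) then 1 else 0
  measurable' := by
    apply Measurable.ite _ measurable_const measurable_const
    have : Measurable fun q : unitI × unitI => (pixelIdx n hn q.1, pixelIdx n hn q.2) :=
      ((measurable_pixelIdx n hn).comp measurable_fst).prodMk
        ((measurable_pixelIdx n hn).comp measurable_snd)
    exact this ((Set.toFinite {q : Fin n × Fin n | G.Adj q.1 q.2}).measurableSet)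
  symm' := by
    intro x y
    simp only [SimpleGraph.adj_comm]
  nonneg' := by intro x y; (try simp only []); split <;> norm_num
  le_one' := by intro x y; (try simp only []); split <;> norm_num

open scoped Classical in
/-- The homomorphism density `t(H, W)` of a finite simple graph `H` in a graphon `W`. -/
def homDensityG {k : ℕ} (H : SimpleGraph (Fin k)) (W : Graphon) : ℝ :=
  ∫ x : Fin k → unitI, ∏ e ∈ H.edgeFinset,
    Sym2.lift ⟨fun i j => W.toFun (x i) (x j), fun i j => W.symm' (x i) (x j)⟩ e

/-- The number of graph homomorphisms from `H` to `G`. -/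
def homCount {k n : ℕ} (H : SimpleGraph (Fin k)) (G : SimpleGraph (Fin n)) : ℕ :=
  Nat.card (H →g G)

/-- The homomorphism density `t(H, G) = hom(H, G) / n ^ k` of `H` in a graph `G` on `n` vertices. -/
def homDensity {k n : ℕ} (H : SimpleGraph (Fin k)) (G : SimpleGraph (Fin n)) : ℝ :=
  (homCount H G : ℝ) / (n : ℝ) ^ k

/-- The 4-cycle `C₄`. -/
def C4 : SimpleGraph (Fin 4) := SimpleGraph.cycleGraph 4

/-- The single edge `K₂`. -/
def K2 : SimpleGraph (Fin 2) := ⊤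


/-!
Replace the factors `W(x_i, x_j)` of the homomorphism integrand by `U(x_i, x_j)` one edge at a
time. Swapping the edge `ab` changes the integral by `∫ F G (W - U)(x_a, x_b)`, where `F` does not
depend on `x_b`, `G` does not depend on `x_a`, and `0 ≤ F, G ≤ 1`. With the remaining coordinates
frozen this is a bilinear form in weights with values in `[0, 1]`; a linear functional of such a
weight is maximised by an indicator function, so the form is at most the cut norm of `W - U`.
Each of the `|E(H)|` swaps thus costs at most `‖W - U‖_□`, and since `t(H, ·)` is invariant
under measure-preserving relabelling, the cut norm may be replaced by the cut distance.
-/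

open Set Function

section CutNorm

variable {α β : Type*} [MeasurableSpace α] [MeasurableSpace β] {μ : Measure α} {ν : Measure β}

def cutNorm (μ : Measure α) (D : α × α → ℝ) : ℝ :=
  ⨆ ST : {ST : Set α × Set α // MeasurableSet ST.1 ∧ MeasurableSet ST.2},
    |∫ q in ST.1.1 ×ˢ ST.1.2, D q ∂μ.prod μ|

lemma abs_setIntegral_prod_le_cutNorm {D : α × α → ℝ} (hD : Integrable D (μ.prod μ))
    {S T : Set α} (hS : MeasurableSet S) (hT : MeasurableSet T) :
    |∫ q in S ×ˢ T, D q ∂μ.prod μ| ≤ cutNorm μ D := by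
  unfold cutNorm
  refine le_ciSup_of_le ⟨∫ q, |D q| ∂μ.prod μ, ?_⟩ ⟨(S, T), hS, hT⟩ le_rfl
  rintro _ ⟨ST, rfl⟩
  exact abs_integral_le_integral_abs.trans
    (setIntegral_le_integral hD.abs (ae_of_all _ fun q => abs_nonneg _))

lemma MeasureTheory.Integrable.mul_of_mem_Icc {f K : α → ℝ} (hK : Integrable K μ)
    (hf : AEStronglyMeasurable f μ) (hf01 : ∀ x, f x ∈ Icc 0 1) :
    Integrable (fun x => f x * K x) μ :=
  hK.bdd_mul hf (ae_of_all _ fun x => by rw [Real.norm_of_nonneg (hf01 x).1]; exact (hf01 x).2)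

lemma integral_mul_le_setIntegral_nonneg {f h : α → ℝ} (hf : Measurable f)
    (hf01 : ∀ x, f x ∈ Icc 0 1) (hh : Measurable h) (hhi : Integrable h μ) :
    ∫ x, f x * h x ∂μ ≤ ∫ x in {x | 0 ≤ h x}, h x ∂μ := by
  have hS : MeasurableSet {x | 0 ≤ h x} := measurableSet_le measurable_const hh
  rw [← integral_indicator hS]
  refine integral_mono (hhi.mul_of_mem_Icc hf.aestronglyMeasurable hf01)
    (hhi.indicator hS) fun x => ?_
  by_cases hx : 0 ≤ h x
  · rw [indicator_of_mem (show x ∈ {x | 0 ≤ h x} from hx)]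
    exact mul_le_of_le_one_left hx (hf01 x).2
  · rw [indicator_of_notMem (show x ∉ {x | 0 ≤ h x} from hx)]
    exact mul_nonpos_of_nonneg_of_nonpos (hf01 x).1 (not_le.1 hx).le

lemma exists_abs_integral_mul_le_abs_setIntegral {f h : α → ℝ} (hf : Measurable f)
    (hf01 : ∀ x, f x ∈ Icc 0 1) (hh : Measurable h) (hhi : Integrable h μ) :
    ∃ S, MeasurableSet S ∧ |∫ x, f x * h x ∂μ| ≤ |∫ x in S, h x ∂μ| := by
  rcases le_or_gt 0 (∫ x, f x * h x ∂μ) with hpos | hneg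
  · refine ⟨{x | 0 ≤ h x}, measurableSet_le measurable_const hh, ?_⟩
    rw [abs_of_nonneg hpos]
    exact (integral_mul_le_setIntegral_nonneg hf hf01 hh hhi).trans (le_abs_self _)
  · refine ⟨{x | 0 ≤ -h x}, measurableSet_le measurable_const hh.neg, ?_⟩
    have := integral_mul_le_setIntegral_nonneg (h := fun x => -h x) hf hf01 hh.neg hhi.neg
    simp only [mul_neg, integral_neg] at this
    rw [abs_of_neg hneg]
    exact (neg_le_neg_iff.1 (by linarith)).trans (neg_le_abs _)

variable [SigmaFinite μ] [SigmaFinite ν]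

lemma exists_abs_integral_mul_fst_le {f : α → ℝ} (hf : Measurable f) (hf01 : ∀ x, f x ∈ Icc 0 1)
    {K : α × β → ℝ} (hKm : Measurable K) (hK : Integrable K (μ.prod ν)) :
    ∃ S, MeasurableSet S ∧
      |∫ q, f q.1 * K q ∂μ.prod ν| ≤ |∫ q, K q ∂(μ.restrict S).prod ν| := by
  have hfK : Integrable (fun q => f q.1 * K q) (μ.prod ν) :=
    hK.mul_of_mem_Icc (hf.comp measurable_fst).aestronglyMeasurable fun q => hf01 q.1
  obtain ⟨S, hS, hle⟩ := exists_abs_integral_mul_le_abs_setIntegral hf hf01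
    hKm.stronglyMeasurable.integral_prod_right'.measurable hK.integral_prod_left
  refine ⟨S, hS, ?_⟩
  have hKS : Integrable K ((μ.restrict S).prod ν) := by
    rw [← Measure.restrict_univ (μ := ν), Measure.prod_restrict]
    exact hK.restrict
  simpa only [integral_prod _ hfK, integral_prod _ hKS, integral_const_mul] using hle

lemma abs_integral_mul_mul_le_cutNorm {D : α × α → ℝ} (hDm : Measurable D)
    (hD : Integrable D (μ.prod μ)) {f g : α → ℝ} (hf : Measurable f) (hf01 : ∀ x, f x ∈ Icc 0 1)
    (hg : Measurable g) (hg01 : ∀ x, g x ∈ Icc 0 1) :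
    |∫ q, f q.1 * g q.2 * D q ∂μ.prod μ| ≤ cutNorm μ D := by
  obtain ⟨S, hS, hleS⟩ := exists_abs_integral_mul_fst_le hf hf01 ((hg.comp measurable_snd).mul hDm)
    (hD.mul_of_mem_Icc (hg.comp measurable_snd).aestronglyMeasurable fun q => hg01 q.2)
  have hDS : Integrable (fun p => D p.swap) (μ.prod (μ.restrict S)) := by
    rw [← Measure.restrict_univ (μ := μ), Measure.prod_restrict, Measure.restrict_univ]
    exact hD.swap.restrict
  obtain ⟨T, hT, hleT⟩ := exists_abs_integral_mul_fst_le hg hg01 (hDm.comp measurable_swap) hDS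
  calc |∫ q, f q.1 * g q.2 * D q ∂μ.prod μ|
      = |∫ q, f q.1 * (g q.2 * D q) ∂μ.prod μ| := by simp only [mul_assoc]
    _ ≤ |∫ q, g q.2 * D q ∂(μ.restrict S).prod μ| := hleS
    _ = |∫ p, g p.1 * D p.swap ∂μ.prod (μ.restrict S)| := by
      rw [← integral_prod_swap]; rfl
    _ ≤ |∫ p, D p.swap ∂(μ.restrict T).prod (μ.restrict S)| := hleT
    _ = |∫ q in S ×ˢ T, D q ∂μ.prod μ| := by rw [integral_prod_swap, Measure.prod_restrict]
    _ ≤ cutNorm μ D := abs_setIntegral_prod_le_cutNorm hD hS hT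

lemma abs_integral_prod_mul_mul_le_cutNorm {Z : Type*} [MeasurableSpace Z] {ρ : Measure Z}
    [IsProbabilityMeasure ρ] {D : α × α → ℝ} (hDm : Measurable D) (hD : Integrable D (μ.prod μ))
    {f g : α × Z → ℝ} (hf : Measurable f) (hf01 : ∀ p, f p ∈ Icc 0 1)
    (hg : Measurable g) (hg01 : ∀ p, g p ∈ Icc 0 1) :
    |∫ w, f (w.1.1, w.2) * g (w.1.2, w.2) * D w.1 ∂(μ.prod μ).prod ρ| ≤ cutNorm μ D := by
  have hfg : Measurable fun w : (α × α) × Z => f (w.1.1, w.2) * g (w.1.2, w.2) := by fun_prop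
  have hint : Integrable (fun w => f (w.1.1, w.2) * g (w.1.2, w.2) * D w.1) ((μ.prod μ).prod ρ) :=
    (hD.comp_fst ρ).mul_of_mem_Icc hfg.aestronglyMeasurable
      fun w => unitInterval.mul_mem (hf01 _) (hg01 _)
  rw [integral_prod_symm _ hint, ← Real.norm_eq_abs]
  refine (norm_integral_le_of_norm_le_const (ae_of_all _ fun z => ?_)).trans
    (by rw [probReal_univ, mul_one])
  exact abs_integral_mul_mul_le_cutNorm hDm hD (hf.comp measurable_prodMk_right)
    (fun u => hf01 (u, z)) (hg.comp measurable_prodMk_right) fun v => hg01 (v, z)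

end CutNorm

section Split

variable {ι α : Type*} [DecidableEq ι] [MeasurableSpace α] {a b : ι}

def finTwoEquivPair (hab : a ≠ b) : Fin 2 ≃ {i : ι // i = a ∨ i = b} where
  toFun j := if j = 0 then ⟨a, Or.inl rfl⟩ else ⟨b, Or.inr rfl⟩
  invFun i := if i.1 = a then 0 else 1
  left_inv j := by fin_cases j <;> simp [hab.symm]
  right_inv := by rintro ⟨i, rfl | rfl⟩ <;> simp [hab.symm]

variable (α) in
def splitEquiv (hab : a ≠ b) :
    ((α × α) × ({i : ι // ¬(i = a ∨ i = b)} → α)) ≃ᵐ (ι → α) :=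
  (MeasurableEquiv.prodCongr
    ((MeasurableEquiv.piFinTwo fun _ => α).symm.trans
      (MeasurableEquiv.piCongrLeft (fun _ => α) (finTwoEquivPair hab)))
    (MeasurableEquiv.refl _)).trans
  (MeasurableEquiv.piEquivPiSubtypeProd (fun _ => α) fun i => i = a ∨ i = b).symm

lemma measurePreserving_splitEquiv [Fintype ι] (hab : a ≠ b) (μ : Measure α) [SigmaFinite μ] :
    MeasurePreserving (splitEquiv α hab) ((μ.prod μ).prod (Measure.pi fun _ => μ))
      (Measure.pi fun _ => μ) :=
  (measurePreserving_piEquivPiSubtypeProd (fun _ => μ) _).symm _ |>.comp <|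
    (((measurePreserving_piCongrLeft (fun _ => μ) (finTwoEquivPair hab)).comp
      (measurePreserving_piFinTwo fun _ => μ).symm).prod (.id _))

variable (u v : α) (z : {i : ι // ¬(i = a ∨ i = b)} → α)

lemma splitEquiv_apply_left (hab : a ≠ b) : splitEquiv α hab ((u, v), z) a = u := by
  simp [splitEquiv, MeasurableEquiv.piEquivPiSubtypeProd, MeasurableEquiv.piCongrLeft,
    MeasurableEquiv.prodCongr, MeasurableEquiv.piFinTwo, Equiv.piEquivPiSubtypeProd,
    Equiv.piCongrLeft, finTwoEquivPair]

lemma splitEquiv_apply_right (hab : a ≠ b) : splitEquiv α hab ((u, v), z) b = v := by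
  simp [splitEquiv, MeasurableEquiv.piEquivPiSubtypeProd, MeasurableEquiv.piCongrLeft,
    MeasurableEquiv.prodCongr, MeasurableEquiv.piFinTwo, Equiv.piEquivPiSubtypeProd,
    Equiv.piCongrLeft, finTwoEquivPair, hab.symm]

lemma splitEquiv_apply_of_not (hab : a ≠ b) {i : ι} (hi : ¬(i = a ∨ i = b)) :
    splitEquiv α hab ((u, v), z) i = z ⟨i, hi⟩ := by
  simp [splitEquiv, MeasurableEquiv.piEquivPiSubtypeProd, MeasurableEquiv.piCongrLeft,
    MeasurableEquiv.prodCongr, MeasurableEquiv.piFinTwo, Equiv.piEquivPiSubtypeProd,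
    Equiv.piCongrLeft, finTwoEquivPair, hi]

lemma update_splitEquiv_left (hab : a ≠ b) (u' : α) :
    update (splitEquiv α hab ((u, v), z)) a u' = splitEquiv α hab ((u', v), z) := by
  funext i
  by_cases hia : i = a
  · subst hia; simp [splitEquiv_apply_left]
  by_cases hib : i = b
  · subst hib; simp [hia, splitEquiv_apply_right]
  · simp [hia, splitEquiv_apply_of_not _ _ _ hab (not_or.2 ⟨hia, hib⟩)]

lemma update_splitEquiv_right (hab : a ≠ b) (v' : α) :
    update (splitEquiv α hab ((u, v), z)) b v' = splitEquiv α hab ((u, v'), z) := by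
  funext i
  by_cases hib : i = b
  · subst hib; simp [splitEquiv_apply_right]
  by_cases hia : i = a
  · subst hia; simp [hib, splitEquiv_apply_left]
  · simp [hib, splitEquiv_apply_of_not _ _ _ hab (not_or.2 ⟨hia, hib⟩)]

end Split

lemma abs_integral_pi_mul_mul_le_cutNorm {ι α : Type*} [Fintype ι] [DecidableEq ι]
    [MeasurableSpace α] {μ : Measure α} [IsProbabilityMeasure μ] {a b : ι} (hab : a ≠ b)
    {D : α × α → ℝ} (hDm : Measurable D) (hD : Integrable D (μ.prod μ))
    {F G : (ι → α) → ℝ} (hF : Measurable F) (hF01 : ∀ x, F x ∈ Icc 0 1)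
    (hFb : ∀ x v, F (update x b v) = F x) (hG : Measurable G) (hG01 : ∀ x, G x ∈ Icc 0 1)
    (hGa : ∀ x u, G (update x a u) = G x) :
    |∫ x, F x * G x * D (x a, x b) ∂Measure.pi fun _ => μ| ≤ cutNorm μ D := by
  let m := splitEquiv α hab
  have hFm : ∀ u v z, F (m ((u, v), z)) = F (m ((u, u), z)) := fun u v z => by
    rw [← update_splitEquiv_right u u z hab v, hFb]
  have hGm : ∀ u v z, G (m ((u, v), z)) = G (m ((v, v), z)) := fun u v z => by
    rw [← update_splitEquiv_left v v z hab u, hGa]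
  rw [← (measurePreserving_splitEquiv hab μ).integral_comp']
  refine le_of_eq_of_le (congrArg abs (integral_congr_ae (ae_of_all _ fun w => ?_)))
    (abs_integral_prod_mul_mul_le_cutNorm (f := fun p => F (m ((p.1, p.1), p.2)))
      (g := fun p => G (m ((p.1, p.1), p.2))) hDm hD (by fun_prop) (fun _ => hF01 _)
      (by fun_prop) (fun _ => hG01 _))
  obtain ⟨⟨u, v⟩, z⟩ := w
  dsimp only
  rw [hFm, hGm, splitEquiv_apply_left, splitEquiv_apply_right]

namespace Graphon

lemma measurable_toFun {β : Type*} [MeasurableSpace β] (W : Graphon) {f g : β → unitI}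
    (hf : Measurable f) (hg : Measurable g) : Measurable fun b => W.toFun (f b) (g b) :=
  W.measurable'.comp (hf.prodMk hg)

def comp (W : Graphon) (φ : unitI ≃ᵐ unitI) : Graphon where
  toFun x y := W.toFun (φ x) (φ y)
  measurable' := W.measurable_toFun (φ.measurable.comp measurable_fst)
    (φ.measurable.comp measurable_snd)
  symm' _ _ := W.symm' _ _
  nonneg' _ _ := W.nonneg' _ _
  le_one' _ _ := W.le_one' _ _

lemma mem_Icc (W : Graphon) (x y : unitI) : W.toFun x y ∈ Icc 0 1 :=
  ⟨W.nonneg' x y, W.le_one' x y⟩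

lemma integrable (W : Graphon) : Integrable (uncurry W.toFun) :=
  .of_mem_Icc 0 1 W.measurable'.aemeasurable (ae_of_all _ fun q => W.mem_Icc q.1 q.2)

variable {ι : Type*}

def onEdge (W : Graphon) (x : ι → unitI) : Sym2 ι → ℝ :=
  Sym2.lift ⟨fun i j => W.toFun (x i) (x j), fun i j => W.symm' (x i) (x j)⟩

@[simp]
lemma onEdge_mk (W : Graphon) (x : ι → unitI) (i j : ι) :
    W.onEdge x s(i, j) = W.toFun (x i) (x j) := rfl

lemma onEdge_mem_Icc (W : Graphon) (x : ι → unitI) (e : Sym2 ι) : W.onEdge x e ∈ Icc 0 1 := by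
  induction e using Sym2.ind with
  | _ i j => exact W.mem_Icc _ _

lemma measurable_onEdge (W : Graphon) (e : Sym2 ι) :
    Measurable fun x : ι → unitI => W.onEdge x e := by
  induction e using Sym2.ind with
  | _ i j => exact W.measurable_toFun (measurable_pi_apply i) (measurable_pi_apply j)

lemma onEdge_update_of_notMem [DecidableEq ι] (W : Graphon) (x : ι → unitI) {e : Sym2 ι}
    {i : ι} (hi : i ∉ e) (v : unitI) : W.onEdge (update x i v) e = W.onEdge x e := by
  induction e using Sym2.ind with
  | _ j l =>
    obtain ⟨hij, hil⟩ := not_or.1 (Sym2.mem_iff.not.1 hi)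
    simp [update_of_ne (Ne.symm hij), update_of_ne (Ne.symm hil)]

def edgeProd (W : Graphon) (s : Finset (Sym2 ι)) (x : ι → unitI) : ℝ :=
  ∏ e ∈ s, W.onEdge x e

lemma edgeProd_mem_Icc (W : Graphon) (s : Finset (Sym2 ι)) (x : ι → unitI) :
    W.edgeProd s x ∈ Icc 0 1 :=
  unitInterval.prod_mem fun e _ => W.onEdge_mem_Icc x e

lemma measurable_edgeProd (W : Graphon) (s : Finset (Sym2 ι)) : Measurable (W.edgeProd s) :=
  Finset.measurable_prod s fun e _ => W.measurable_onEdge e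

lemma edgeProd_update_of_forall_notMem [DecidableEq ι] (W : Graphon) {s : Finset (Sym2 ι)}
    {i : ι} (hs : ∀ e ∈ s, i ∉ e) (x : ι → unitI) (v : unitI) :
    W.edgeProd s (update x i v) = W.edgeProd s x :=
  Finset.prod_congr rfl fun e he => W.onEdge_update_of_notMem x (hs e he) v

lemma edgeProd_filter_mul_filter_not (W : Graphon) (s : Finset (Sym2 ι)) (p : Sym2 ι → Prop)
    [DecidablePred p] (x : ι → unitI) :
    W.edgeProd (s.filter p) x * W.edgeProd (s.filter (¬p ·)) x = W.edgeProd s x :=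
  Finset.prod_filter_mul_prod_filter_not s p _

variable [Fintype ι]

def hybridDensity (W U : Graphon) (A B : Finset (Sym2 ι)) : ℝ :=
  ∫ x, W.edgeProd A x * U.edgeProd B x

lemma integrable_edgeProd_mul (W U : Graphon) (A B : Finset (Sym2 ι)) :
    Integrable fun x => W.edgeProd A x * U.edgeProd B x :=
  .of_mem_Icc 0 1 ((W.measurable_edgeProd A).mul (U.measurable_edgeProd B)).aemeasurable
    (ae_of_all _ fun x => unitInterval.mul_mem (W.edgeProd_mem_Icc A x) (U.edgeProd_mem_Icc B x))

lemma hybridDensity_insert_sub [DecidableEq ι] (W U : Graphon) {A B : Finset (Sym2 ι)}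
    {e : Sym2 ι} (hA : e ∉ A) (hB : e ∉ B) :
    hybridDensity W U (insert e A) B - hybridDensity W U A (insert e B) =
      ∫ x, W.edgeProd A x * U.edgeProd B x * (W.onEdge x e - U.onEdge x e) := by
  rw [hybridDensity, hybridDensity, ← integral_sub (integrable_edgeProd_mul W U _ _)
    (integrable_edgeProd_mul W U _ _)]
  congr 1 with x
  simp only [edgeProd, Finset.prod_insert hA, Finset.prod_insert hB]
  ring

lemma abs_integral_edgeProd_mul_sub_le_cutNorm [DecidableEq ι] (W U : Graphon)
    {A B : Finset (Sym2 ι)} {e : Sym2 ι} (he : ¬e.IsDiag) (hA : e ∉ A) (hB : e ∉ B) :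
    |∫ x, W.edgeProd A x * U.edgeProd B x * (W.onEdge x e - U.onEdge x e)| ≤
      cutNorm volume fun q => W.toFun q.1 q.2 - U.toFun q.1 q.2 := by
  induction e using Sym2.ind with
  | _ a b =>
    have hab : a ≠ b := fun h => he (Sym2.mk_isDiag_iff.2 h)
    have avoid_a : ∀ {s : Finset (Sym2 ι)}, s(a, b) ∉ s → ∀ e ∈ s.filter (b ∈ ·), a ∉ e :=
      fun hs e he ha => by
        obtain ⟨hes, hbe⟩ := Finset.mem_filter.1 he
        exact hs ((Sym2.mem_and_mem_iff hab).1 ⟨ha, hbe⟩ ▸ hes)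
    have avoid_b : ∀ s : Finset (Sym2 ι), ∀ e ∈ s.filter (b ∉ ·), b ∉ e :=
      fun s e he => (Finset.mem_filter.1 he).2
    set F := fun x => W.edgeProd (A.filter (b ∉ ·)) x * U.edgeProd (B.filter (b ∉ ·)) x
    set G := fun x => W.edgeProd (A.filter (b ∈ ·)) x * U.edgeProd (B.filter (b ∈ ·)) x
    have hF : ∀ x v, F (update x b v) = F x := fun x v => by
      simp only [F, edgeProd_update_of_forall_notMem _ (avoid_b _)]
    have hG : ∀ x u, G (update x a u) = G x := fun x u => by
      simp only [G, edgeProd_update_of_forall_notMem _ (avoid_a hA),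
        edgeProd_update_of_forall_notMem _ (avoid_a hB)]
    have hsplit : ∀ x, W.edgeProd A x * U.edgeProd B x * (W.onEdge x s(a, b) - U.onEdge x s(a, b))
        = F x * G x * (W.toFun (x a) (x b) - U.toFun (x a) (x b)) := fun x => by
      rw [← W.edgeProd_filter_mul_filter_not A (b ∈ ·),
        ← U.edgeProd_filter_mul_filter_not B (b ∈ ·), onEdge_mk, onEdge_mk]
      ring
    simp only [hsplit]
    exact abs_integral_pi_mul_mul_le_cutNorm hab (W.measurable'.sub U.measurable')
      (W.integrable.sub U.integrable) ((W.measurable_edgeProd _).mul (U.measurable_edgeProd _))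
      (fun x => unitInterval.mul_mem (W.edgeProd_mem_Icc _ x) (U.edgeProd_mem_Icc _ x)) hF
      ((W.measurable_edgeProd _).mul (U.measurable_edgeProd _))
      (fun x => unitInterval.mul_mem (W.edgeProd_mem_Icc _ x) (U.edgeProd_mem_Icc _ x)) hG

lemma abs_hybridDensity_sub_le (W U : Graphon) (E : Finset (Sym2 ι))
    (hE : ∀ e ∈ E, ¬e.IsDiag) :
    |hybridDensity W U E ∅ - hybridDensity W U ∅ E| ≤
      E.card * cutNorm volume fun q => W.toFun q.1 q.2 - U.toFun q.1 q.2 := by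
  classical
  set c := cutNorm volume fun q => W.toFun q.1 q.2 - U.toFun q.1 q.2
  suffices h : |hybridDensity W U E (E \ E) - hybridDensity W U ∅ E| ≤ E.card * c by
    rwa [Finset.sdiff_self] at h
  refine Finset.induction_on' E
    (motive := fun A => |hybridDensity W U A (E \ A) - hybridDensity W U ∅ E| ≤ A.card * c)
    (by simp) fun {e A} heE _ heA ih => ?_
  have hsplit : E \ A = insert e (E \ insert e A) := by
    rw [Finset.sdiff_insert, Finset.insert_erase (Finset.mem_sdiff.2 ⟨heE, heA⟩)]
  have hstep : |hybridDensity W U (insert e A) (E \ insert e A) -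
      hybridDensity W U A (insert e (E \ insert e A))| ≤ c := by
    rw [hybridDensity_insert_sub W U heA (by simp)]
    exact abs_integral_edgeProd_mul_sub_le_cutNorm W U (hE e heE) heA (by simp)
  rw [hsplit] at ih
  rw [Finset.card_insert_of_notMem heA, Nat.cast_succ, add_one_mul, add_comm]
  exact (abs_sub_le _ _ _).trans (add_le_add hstep ih)

end Graphon

open Graphon

open scoped Classical in
lemma abs_homDensityG_sub_le {k : ℕ} (H : SimpleGraph (Fin k)) (W U : Graphon) :
    |homDensityG H W - homDensityG H U| ≤
      H.edgeFinset.card * cutNorm volume fun q => W.toFun q.1 q.2 - U.toFun q.1 q.2 := by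
  have hW : homDensityG H W = hybridDensity W U H.edgeFinset ∅ := by
    simp only [hybridDensity, edgeProd, Finset.prod_empty, mul_one]; rfl
  have hU : homDensityG H U = hybridDensity W U ∅ H.edgeFinset := by
    simp only [hybridDensity, edgeProd, Finset.prod_empty, one_mul]; rfl
  rw [hW, hU]
  exact abs_hybridDensity_sub_le W U _ fun e he =>
    H.not_isDiag_of_mem_edgeSet (SimpleGraph.mem_edgeFinset.1 he)

open scoped Classical in
lemma homDensityG_comp {k : ℕ} (H : SimpleGraph (Fin k)) (W : Graphon) {φ : unitI ≃ᵐ unitI}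
    (hφ : MeasurePreserving φ volume volume) : homDensityG H (W.comp φ) = homDensityG H W := by
  unfold homDensityG
  exact (volume_preserving_pi (ι := Fin k) fun _ => hφ).integral_comp'
    (f := MeasurableEquiv.piCongrRight fun _ => φ) fun x => ∏ e ∈ H.edgeFinset, W.onEdge x e

open scoped Classical in
/-- **Theorem 3.** For every finite simple graph `H`, the homomorphism density functional
`t(H, ·)` is Lipschitz (with constant `|E(H)|`) with respect to the cut distance. -/
theorem homDensity_lipschitz_cutDist {k : ℕ} (H : SimpleGraph (Fin k)) (W U : Graphon) :
    |homDensityG H W - homDensityG H U| ≤ (H.edgeFinset.card : ℝ) * cutDist W U := by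
  have : Nonempty {p : (unitI ≃ᵐ unitI) × (unitI ≃ᵐ unitI) //
      MeasurePreserving p.1 volume volume ∧ MeasurePreserving p.2 volume volume} :=
    ⟨⟨(.refl _, .refl _), .id _, .id _⟩⟩
  rw [cutDist, Real.mul_iInf_of_nonneg (Nat.cast_nonneg _)]
  refine le_ciInf fun ⟨(φ, ψ), hφ, hψ⟩ => ?_
  rw [← homDensityG_comp H W hφ, ← homDensityG_comp H U hψ]
  exact abs_homDensityG_sub_le H (W.comp φ) (U.comp ψ)
end
end

section
/- (Erdős) For every finite simple graph G, the homomorphism density of the 4-cycle in G is at least the fourth power of the homomorphism density of an edge in G: t(C₄, G) ≥ t(K₂, G)⁴. Equivalently, hom(C₄, G) · |V(G)|⁴ ≥ hom(K₂, G)⁴. -/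
open MeasureTheory

attribute [local instance] MeasureTheory.Measure.Subtype.measureSpace

noncomputable section

/-! Write `d v` for degrees and `c u w` for numbers of common neighbours. A homomorphism
`C₄ → G` is a pair `(u, w)` of images of opposite vertices together with two common neighbours
of `u` and `w`, so `hom(C₄, G) = ∑ c u w ²`; counting paths of length two by their middle vertex
gives `∑ c u w = ∑ d v ²`, and `hom(K₂, G) = ∑ d v`. Cauchy–Schwarz twice,
`(∑ d)² ≤ n ∑ d²` and `(∑ c)² ≤ n² ∑ c²`, yields `hom(K₂, G)⁴ ≤ n⁴ hom(C₄, G)`. -/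

namespace SimpleGraph

variable {V : Type*} (G : SimpleGraph V)

def topFinTwoHomEquivDart : ((⊤ : SimpleGraph (Fin 2)) →g G) ≃ G.Dart where
  toFun f := ⟨(f 0, f 1), f.map_adj (by simp)⟩
  invFun d := ⟨![d.fst, d.snd], fun {i j} hij => by
    fin_cases i <;> fin_cases j <;> simp_all [d.adj, d.adj.symm]⟩
  left_inv f := by ext i; fin_cases i <;> rfl
  right_inv _ := rfl

def cycleGraphHomOfAdjSucc {n : ℕ} (f : Fin (n + 2) → V) (hf : ∀ i, G.Adj (f i) (f (i + 1))) :
    cycleGraph (n + 2) →g G where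
  toFun := f
  map_rel' {i j} hij := by
    rcases cycleGraph_adj.1 hij with h | h
    · rw [sub_eq_iff_eq_add'.1 h]; exact (hf j).symm
    · rw [sub_eq_iff_eq_add'.1 h]; exact hf i

def cycleGraphFourHomEquiv :
    (cycleGraph 4 →g G) ≃ Σ p : V × V, G.commonNeighbors p.1 p.2 × G.commonNeighbors p.1 p.2 where
  toFun f := ⟨(f 0, f 2), ⟨f 1, f.map_adj (by decide), (f.map_adj (by decide) : G.Adj (f 2) (f 1))⟩,
    ⟨f 3, (f.map_adj (by decide) : G.Adj (f 0) (f 3)), f.map_adj (by decide)⟩⟩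
  invFun q := G.cycleGraphHomOfAdjSucc ![q.1.1, q.2.1, q.1.2, q.2.2] fun i => by
    obtain ⟨⟨u, w⟩, ⟨x, hux, hwx⟩, ⟨y, huy, hwy⟩⟩ := q
    fin_cases i
    exacts [hux, hwx.symm, hwy, huy.symm]
  left_inv f := by ext i; fin_cases i <;> rfl
  right_inv _ := rfl

def sigmaCommonNeighborsEquiv :
    (Σ p : V × V, G.commonNeighbors p.1 p.2) ≃ Σ v, G.neighborSet v × G.neighborSet v where
  toFun q := ⟨q.2, ⟨q.1.1, q.2.2.1.symm⟩, ⟨q.1.2, q.2.2.2.symm⟩⟩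
  invFun q := ⟨(q.2.1, q.2.2), q.1, q.2.1.2.symm, q.2.2.2.symm⟩
  left_inv _ := rfl
  right_inv _ := rfl

variable [Fintype V] [DecidableRel G.Adj]

theorem natCard_topFinTwo_hom_eq_sum_degree :
    Nat.card ((⊤ : SimpleGraph (Fin 2)) →g G) = ∑ v, G.degree v := by
  rw [Nat.card_congr G.topFinTwoHomEquivDart, Nat.card_eq_fintype_card, dart_card_eq_sum_degrees]

theorem natCard_cycleGraphFour_hom_eq_sum_sq_card_commonNeighbors :
    Nat.card (cycleGraph 4 →g G) = ∑ p : V × V, Fintype.card (G.commonNeighbors p.1 p.2) ^ 2 := by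
  rw [Nat.card_congr G.cycleGraphFourHomEquiv, Nat.card_eq_fintype_card, Fintype.card_sigma]
  simp only [Fintype.card_prod, sq]

theorem sum_card_commonNeighbors_eq_sum_sq_degree :
    ∑ p : V × V, Fintype.card (G.commonNeighbors p.1 p.2) = ∑ v, G.degree v ^ 2 := by
  simpa only [Fintype.card_sigma, Fintype.card_prod, card_neighborSet_eq_degree, sq] using
    Fintype.card_congr G.sigmaCommonNeighborsEquiv

theorem sum_degree_pow_four_le_card_pow_four_mul_sum_sq_card_commonNeighbors :
    (∑ v, G.degree v) ^ 4 ≤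
      Fintype.card V ^ 4 * ∑ p : V × V, Fintype.card (G.commonNeighbors p.1 p.2) ^ 2 := by
  have hdeg : (∑ v, G.degree v) ^ 2 ≤ Fintype.card V * ∑ v, G.degree v ^ 2 :=
    sq_sum_le_card_mul_sum_sq
  have hcodeg : (∑ v, G.degree v ^ 2) ^ 2 ≤
      Fintype.card V ^ 2 * ∑ p : V × V, Fintype.card (G.commonNeighbors p.1 p.2) ^ 2 := by
    rw [← sum_card_commonNeighbors_eq_sum_sq_degree, sq (Fintype.card V), ← Fintype.card_prod]
    exact sq_sum_le_card_mul_sum_sq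
  calc (∑ v, G.degree v) ^ 4 = ((∑ v, G.degree v) ^ 2) ^ 2 := by ring
    _ ≤ (Fintype.card V * ∑ v, G.degree v ^ 2) ^ 2 := by gcongr
    _ = Fintype.card V ^ 2 * (∑ v, G.degree v ^ 2) ^ 2 := by ring
    _ ≤ Fintype.card V ^ 2 * (Fintype.card V ^ 2 *
          ∑ p : V × V, Fintype.card (G.commonNeighbors p.1 p.2) ^ 2) := by gcongr
    _ = _ := by ring

end SimpleGraph

theorem cycle4_density_ge_edge_density_pow_four_general {n : ℕ}
    (G : SimpleGraph (Fin n)) :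
    homDensity C4 G ≥ (homDensity K2 G) ^ 4 ∧
      homCount C4 G * n ^ 4 ≥ (homCount K2 G) ^ 4 := by
  classical
  have hcount : homCount K2 G ^ 4 ≤ n ^ 4 * homCount C4 G := by
    rw [homCount, homCount, K2, C4, G.natCard_topFinTwo_hom_eq_sum_degree,
      G.natCard_cycleGraphFour_hom_eq_sum_sq_card_commonNeighbors]
    simpa only [Fintype.card_fin] using
      G.sum_degree_pow_four_le_card_pow_four_mul_sum_sq_card_commonNeighbors
  refine ⟨?_, by rw [mul_comm]; exact hcount⟩
  have hcount' : (homCount K2 G : ℝ) ^ 4 ≤ n ^ 4 * homCount C4 G := by exact_mod_cast hcount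
  calc homDensity K2 G ^ 4 = (homCount K2 G : ℝ) ^ 4 / n ^ 4 / n ^ 4 := by
        rw [homDensity, div_pow, ← pow_mul, div_div, ← pow_add]
    _ ≤ homDensity C4 G := by
        rw [homDensity]
        gcongr
        exact div_le_of_le_mul₀ (by positivity) (by positivity) (by linarith)

/-- (Erdős) `t(C₄, G) ≥ t(K₂, G)⁴` for every finite simple graph `G`; equivalently,
`hom(C₄, G) · |V(G)|⁴ ≥ hom(K₂, G)⁴`. -/
theorem cycle4_density_ge_edge_density_pow_four {n : ℕ} (hn : 0 < n)
    (G : SimpleGraph (Fin n)) :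
    homDensity C4 G ≥ (homDensity K2 G) ^ 4 ∧
      homCount C4 G * n ^ 4 ≥ (homCount K2 G) ^ 4 :=
  cycle4_density_ge_edge_density_pow_four_general G
end
end

section
/- For every graphon W, the 4-cycle density of W is at least the fourth power of the edge density of W: ∫_{[0,1]⁴} W(x₁,x₂) W(x₂,x₃) W(x₃,x₄) W(x₄,x₁) dx₁ dx₂ dx₃ dx₄ ≥ (∫_{[0,1]²} W(x,y) dx dy)⁴. -/
open MeasureTheory

attribute [local instance] MeasureTheory.Measure.Subtype.measureSpace

noncomputable section

/-!
Write `d x = ∫ W x y dy` for the degree and `c x z = ∫ W x y * W y z dy` for the codegree.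
Splitting the 4-cycle `x₀x₁x₂x₃` along the diagonal `x₀x₂` shows that its density is `∫∫ c²`,
while symmetry of `W` gives `∫∫ c = ∫ d²`, and the edge density is `∫ d`. Two applications of
Cauchy–Schwarz, `∫∫ c² ≥ (∫∫ c)² = (∫ d²)² ≥ (∫ d)⁴`, give the claim.
-/

section
variable {α : Type*} [MeasurableSpace α]

theorem measurePreserving_prodProd_to_finFour (μ : Measure α) [SigmaFinite μ] :
    MeasurePreserving (fun z : (α × α) × (α × α) => ![z.1.1, z.2.1, z.1.2, z.2.2])
      ((μ.prod μ).prod (μ.prod μ)) (Measure.pi fun _ => μ) := by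
  have hmeas : Measurable (fun z : (α × α) × (α × α) => ![z.1.1, z.2.1, z.1.2, z.2.2]) := by
    refine measurable_pi_lambda _ fun i => ?_
    fin_cases i <;> simp only [Fin.reduceFinMk, Fin.zero_eta, Fin.mk_one, Matrix.cons_val] <;> fun_prop
  refine ⟨hmeas, (Measure.pi_eq fun s hs => ?_).symm⟩
  have hpre : (fun z : (α × α) × (α × α) => ![z.1.1, z.2.1, z.1.2, z.2.2]) ⁻¹' Set.univ.pi s
      = (s 0 ×ˢ s 2) ×ˢ (s 1 ×ˢ s 3) := by
    ext z
    simp only [Set.mem_preimage, Set.mem_pi, Set.mem_univ, forall_const, Fin.forall_fin_succ,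
      Matrix.cons_val_zero, Matrix.cons_val_succ, Fin.succ_zero_eq_one, Fin.succ_one_eq_two,
      Matrix.cons_val_fin_one, Fin.reduceSucc, IsEmpty.forall_iff, and_true, Set.mem_prod]
    tauto
  rw [Measure.map_apply hmeas (MeasurableSet.univ_pi hs), hpre, Measure.prod_prod, Measure.prod_prod,
    Measure.prod_prod, Fin.prod_univ_four]
  ring

theorem sq_integral_le_integral_sq (μ : Measure α) [IsProbabilityMeasure μ] {f : α → ℝ}
    (hf : MemLp f 2 μ) : (∫ x, f x ∂μ) ^ 2 ≤ ∫ x, f x ^ 2 ∂μ := by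
  have h := ProbabilityTheory.variance_nonneg f μ
  rw [ProbabilityTheory.variance_eq_sub hf] at h
  simpa using h

variable (μ : Measure α) (W : α → α → ℝ)

def kernelDegree (x : α) : ℝ := ∫ y, W x y ∂μ

def kernelCodegree (x z : α) : ℝ := ∫ y, W x y * W y z ∂μ

variable {μ W}

theorem kernelCodegree_comm (hsymm : ∀ x y, W x y = W y x) (x z : α) :
    kernelCodegree μ W x z = kernelCodegree μ W z x := by
  simp only [kernelCodegree, hsymm x, hsymm _ z, mul_comm]

theorem stronglyMeasurable_kernelDegree [SFinite μ] (hW : Measurable (Function.uncurry W)) :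
    StronglyMeasurable (kernelDegree μ W) :=
  hW.stronglyMeasurable.integral_prod_right'

theorem stronglyMeasurable_kernelCodegree [SFinite μ] (hW : Measurable (Function.uncurry W)) :
    StronglyMeasurable (Function.uncurry (kernelCodegree μ W)) := by
  have h : Measurable fun q : (α × α) × α => W q.1.1 q.2 * W q.2 q.1.2 := by fun_prop
  exact h.stronglyMeasurable.integral_prod_right'

variable [IsProbabilityMeasure μ] {C : ℝ}

theorem norm_kernelDegree_le (hC : ∀ x y, ‖W x y‖ ≤ C) (x : α) :
    ‖kernelDegree μ W x‖ ≤ C := by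
  simpa [kernelDegree] using norm_integral_le_of_norm_le_const (μ := μ) (ae_of_all _ (hC x))

theorem norm_kernelCodegree_le (hC : ∀ x y, ‖W x y‖ ≤ C) (x z : α) :
    ‖kernelCodegree μ W x z‖ ≤ C ^ 2 := by
  simpa [kernelCodegree, sq] using norm_integral_le_of_norm_le_const (μ := μ)
    (ae_of_all _ fun y => norm_mul_le_of_le (hC x y) (hC y z))

theorem integral_kernel_eq_integral_kernelDegree (hW : Measurable (Function.uncurry W))
    (hC : ∀ x y, ‖W x y‖ ≤ C) :
    ∫ p, W p.1 p.2 ∂(μ.prod μ) = ∫ x, kernelDegree μ W x ∂μ :=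
  integral_prod _ (Integrable.of_bound hW.aestronglyMeasurable C (ae_of_all _ fun p => hC p.1 p.2))

theorem integral_kernelCodegree (hW : Measurable (Function.uncurry W))
    (hsymm : ∀ x y, W x y = W y x) (hC : ∀ x y, ‖W x y‖ ≤ C) :
    ∫ p, kernelCodegree μ W p.1 p.2 ∂(μ.prod μ) = ∫ y, kernelDegree μ W y ^ 2 ∂μ := by
  have hint : Integrable (Function.uncurry fun (y : α) (p : α × α) => W y p.1 * W y p.2)
      (μ.prod (μ.prod μ)) :=
    Integrable.of_bound (by fun_prop) (C * C)
      (ae_of_all _ fun q => norm_mul_le_of_le (hC _ _) (hC _ _))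
  calc ∫ p, kernelCodegree μ W p.1 p.2 ∂(μ.prod μ)
      = ∫ p, ∫ y, W y p.1 * W y p.2 ∂μ ∂(μ.prod μ) := by
        simp only [kernelCodegree, hsymm _ (Prod.fst _)]
    _ = ∫ y, ∫ p, W y p.1 * W y p.2 ∂(μ.prod μ) ∂μ := (integral_integral_swap hint).symm
    _ = ∫ y, kernelDegree μ W y ^ 2 ∂μ := by
        simp only [integral_prod_mul, kernelDegree, sq]

theorem integral_cycle4_eq_integral_sq_kernelCodegree (hW : Measurable (Function.uncurry W))
    (hsymm : ∀ x y, W x y = W y x) (hC : ∀ x y, ‖W x y‖ ≤ C) :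
    ∫ x : Fin 4 → α, W (x 0) (x 1) * W (x 1) (x 2) * W (x 2) (x 3) * W (x 3) (x 0)
        ∂(Measure.pi fun _ => μ)
      = ∫ p, kernelCodegree μ W p.1 p.2 ^ 2 ∂(μ.prod μ) := by
  have hmp := measurePreserving_prodProd_to_finFour μ
  have hF : Measurable fun x : Fin 4 → α =>
      W (x 0) (x 1) * W (x 1) (x 2) * W (x 2) (x 3) * W (x 3) (x 0) := by fun_prop
  have hint : Integrable (fun z : (α × α) × (α × α) =>
      W z.1.1 z.2.1 * W z.2.1 z.1.2 * (W z.1.2 z.2.2 * W z.2.2 z.1.1)) ((μ.prod μ).prod (μ.prod μ)) :=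
    Integrable.of_bound (by fun_prop) (C * C * (C * C)) (ae_of_all _ fun z =>
      norm_mul_le_of_le (norm_mul_le_of_le (hC _ _) (hC _ _)) (norm_mul_le_of_le (hC _ _) (hC _ _)))
  calc _ = ∫ z, W z.1.1 z.2.1 * W z.2.1 z.1.2 * (W z.1.2 z.2.2 * W z.2.2 z.1.1)
          ∂((μ.prod μ).prod (μ.prod μ)) := by
        rw [← hmp.map_eq, integral_map hmp.measurable.aemeasurable hF.aestronglyMeasurable]
        simp [mul_assoc]
    _ = ∫ p, ∫ q, W p.1 q.1 * W q.1 p.2 * (W p.2 q.2 * W q.2 p.1) ∂(μ.prod μ) ∂(μ.prod μ) :=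
        integral_prod _ hint
    _ = ∫ p, kernelCodegree μ W p.1 p.2 ^ 2 ∂(μ.prod μ) := by
        congr 1 with p
        rw [sq]
        nth_rewrite 2 [kernelCodegree_comm hsymm]
        exact integral_prod_mul (fun b => W p.1 b * W b p.2) (fun d => W p.2 d * W d p.1)

theorem pow_four_integral_kernel_le_integral_cycle4 (hW : Measurable (Function.uncurry W))
    (hsymm : ∀ x y, W x y = W y x) (hC : ∀ x y, ‖W x y‖ ≤ C) :
    (∫ p, W p.1 p.2 ∂(μ.prod μ)) ^ 4 ≤
      ∫ x : Fin 4 → α, W (x 0) (x 1) * W (x 1) (x 2) * W (x 2) (x 3) * W (x 3) (x 0)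
        ∂(Measure.pi fun _ => μ) := by
  have hdeg : MemLp (kernelDegree μ W) 2 μ :=
    .of_bound (stronglyMeasurable_kernelDegree hW).aestronglyMeasurable C
      (ae_of_all _ (norm_kernelDegree_le hC))
  have hcodeg : MemLp (fun p : α × α => kernelCodegree μ W p.1 p.2) 2 (μ.prod μ) :=
    .of_bound (stronglyMeasurable_kernelCodegree hW).aestronglyMeasurable (C ^ 2)
      (ae_of_all _ fun p => norm_kernelCodegree_le hC p.1 p.2)
  calc (∫ p, W p.1 p.2 ∂(μ.prod μ)) ^ 4
      = ((∫ x, kernelDegree μ W x ∂μ) ^ 2) ^ 2 := by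
        rw [integral_kernel_eq_integral_kernelDegree hW hC]; ring
    _ ≤ (∫ x, kernelDegree μ W x ^ 2 ∂μ) ^ 2 :=
        pow_le_pow_left₀ (sq_nonneg _) (sq_integral_le_integral_sq μ hdeg) 2
    _ = (∫ p, kernelCodegree μ W p.1 p.2 ∂(μ.prod μ)) ^ 2 := by
        rw [integral_kernelCodegree hW hsymm hC]
    _ ≤ ∫ p, kernelCodegree μ W p.1 p.2 ^ 2 ∂(μ.prod μ) := sq_integral_le_integral_sq _ hcodeg
    _ = _ := (integral_cycle4_eq_integral_sq_kernelCodegree hW hsymm hC).symm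

end

/-- For every graphon `W`, the 4-cycle density of `W` is at least the fourth power of the
edge density of `W`. -/
theorem graphon_cycle4_density_ge_edge_density_pow_four (W : Graphon) :
    (∫ x : Fin 4 → unitI,
        W.toFun (x 0) (x 1) * W.toFun (x 1) (x 2) * W.toFun (x 2) (x 3) * W.toFun (x 3) (x 0))
      ≥ (∫ p : unitI × unitI, W.toFun p.1 p.2) ^ 4 :=
  pow_four_integral_kernel_le_integral_cycle4 W.measurable' W.symm' fun x y => by
    rw [Real.norm_of_nonneg (W.nonneg' x y)]
    exact W.le_one' x y
end
end
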